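/- arXiv:2402.00960 — 4 statements merged into one kernel-verified Lean document; each statement's English description precedes it below -/
import Mathlib

section
/- Let p be a prime and let L/K be a cyclic totally ramified extension of degree p of local fields of characteristic (0,p). Suppose that for some integer n ≥ 1 one has v_L(𝒟_{L/K}) ≥ e_L(1 − p^{−n}) + (p − 1). Then for every x ∈ L one has v(tr_{L/K}(x)) ≥ (1 − p^{−n}) + v(x). -/
/-- Data exhibiting `L` as a local field of characteristic `(0, p)`: a multiplicative
nonarchimedean absolute value `a` (representing the absolute valuation `v` via
`a x = c ^ v x` for a base `0 < c < 1`), a uniformizer `ϖ` generating the (discrete)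
value group, residue characteristic `p` (`a p < 1`), completeness, and perfectness of
the residue field (surjectivity of the `p`-power map on residues). -/
structure LocalFieldData (p : ℕ) (L : Type*) [Field L] where
  a : L → ℝ
  a_zero : a 0 = 0
  a_pos : ∀ x : L, x ≠ 0 → 0 < a x
  a_mul : ∀ x y : L, a (x * y) = a x * a y
  a_add : ∀ x y : L, a (x + y) ≤ max (a x) (a y)
  ϖ : L
  ϖ_pos : 0 < a ϖ
  ϖ_lt_one : a ϖ < 1
  disc : ∀ x : L, x ≠ 0 → ∃ k : ℤ, a x = a ϖ ^ k
  res_char : a (p : L) < 1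
  complete : ∀ u : ℕ → L,
    (∀ ε : ℝ, 0 < ε → ∃ N : ℕ, ∀ m ≥ N, ∀ n ≥ N, a (u m - u n) < ε) →
    ∃ l : L, ∀ ε : ℝ, 0 < ε → ∃ N : ℕ, ∀ n ≥ N, a (u n - l) < ε
  perfect_res : ∀ x : L, a x ≤ 1 → ∃ y : L, a y ≤ 1 ∧ a (x - y ^ p) < 1

namespace LocalFieldData
variable {p : ℕ} {L : Type*} [Field L] (D : LocalFieldData p L)

lemma a_one : D.a 1 = 1 := by
  have h := D.a_mul 1 1
  rw [mul_one] at h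
  have h1 : (0:ℝ) < D.a 1 := D.a_pos 1 one_ne_zero
  have h2 : D.a 1 * D.a 1 = 1 * D.a 1 := by rw [one_mul]; exact h.symm
  exact mul_right_cancel₀ (ne_of_gt h1) h2

lemma a_nonneg (x : L) : 0 ≤ D.a x := by
  rcases eq_or_ne x 0 with h | h
  · rw [h, D.a_zero]
  · exact (D.a_pos x h).le

lemma a_pow (x : L) (n : ℕ) : D.a (x ^ n) = D.a x ^ n := by
  induction n with
  | zero => simp [D.a_one]
  | succ n ih => rw [pow_succ, D.a_mul, ih, pow_succ]

lemma a_inv (x : L) (hx : x ≠ 0) : D.a x⁻¹ = (D.a x)⁻¹ := by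
  have h := D.a_mul x x⁻¹
  rw [mul_inv_cancel₀ hx, D.a_one] at h
  exact eq_inv_of_mul_eq_one_right h.symm

lemma a_zpow (x : L) (hx : x ≠ 0) : ∀ k : ℤ, D.a (x ^ k) = D.a x ^ k
  | Int.ofNat m => by
      simpa [zpow_natCast] using D.a_pow x m
  | Int.negSucc m => by
      rw [zpow_negSucc, D.a_inv _ (pow_ne_zero _ hx), D.a_pow, zpow_negSucc]

end LocalFieldData

/-- Let `L/K` be a cyclic totally ramified extension of degree `p` of
local fields of characteristic `(0,p)`.  If for some `n ≥ 1` one has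
`v_L(𝒟_{L/K}) ≥ e_L (1 - p⁻ⁿ) + (p - 1)`, then for every `x ∈ L`,
`v(tr_{L/K} x) ≥ (1 - p⁻ⁿ) + v(x)`; multiplicatively,
`|tr_{L/K} x| ≤ |p| ^ (1 - p⁻ⁿ) * |x|`.  The different is encoded by its valuation `dd`
through the trace-dual characterization `𝒟_{L/K}⁻¹ = {x : tr(x · 𝒪_L) ⊆ 𝒪_K} = ϖ_L^(-dd) 𝒪_L`. -/
theorem trace_bound_of_different_bound
    (p n : ℕ) (hp : p.Prime) (hn : 1 ≤ n)
    (K L : Type*) [Field K] [Field L] [CharZero K] [CharZero L] [Algebra K L]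
    [IsGalois K L] [FiniteDimensional K L]
    (hdeg : Module.finrank K L = p)
    (DK : LocalFieldData p K) (DL : LocalFieldData p L)
    (hcompat : ∀ x : K, DL.a (algebraMap K L x) = DK.a x)
    (htot : DL.a (algebraMap K L DK.ϖ) = DL.a DL.ϖ ^ p)
    (eL : ℕ) (heL : DL.a ((p : L)) = DL.a DL.ϖ ^ eL)
    (dd : ℕ)
    (hdd : ∀ x : L,
      (∀ y : L, DL.a y ≤ 1 → DK.a (Algebra.trace K L (x * y)) ≤ 1) ↔
        DL.a x ≤ DL.a DL.ϖ ^ (-(dd : ℤ)))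
    (hbound : (eL : ℝ) * (1 - ((p : ℝ))⁻¹ ^ n) + ((p : ℝ) - 1) ≤ (dd : ℝ)) :
    ∀ x : L, DK.a (Algebra.trace K L x) ≤
      DL.a ((p : L)) ^ ((1 : ℝ) - ((p : ℝ))⁻¹ ^ n) * DL.a x := by
  intro x
  set c : ℝ := DL.a DL.ϖ with hc_def
  have hc : 0 < c := DL.ϖ_pos
  have hc1 : c < 1 := DL.ϖ_lt_one
  set s : ℝ := (1 : ℝ) - ((p : ℝ))⁻¹ ^ n with hs_def
  -- trivial case x = 0
  rcases eq_or_ne x 0 with rfl | hx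
  · rw [map_zero, DK.a_zero, DL.a_zero, mul_zero]
  obtain ⟨m, hm⟩ := DL.disc x hx
  have hp0 : (0:ℤ) < (p:ℤ) := by exact_mod_cast hp.pos
  set k : ℤ := (m + dd) / p with hk_def
  set r : ℤ := (m + dd) % p with hr_def
  have hdiv : (p:ℤ) * k + r = m + dd := Int.mul_ediv_add_emod (m + dd) p
  have hr0 : 0 ≤ r := Int.emod_nonneg _ hp0.ne'
  have hrp : r < p := Int.emod_lt_of_pos _ hp0
  have hϖK : DK.ϖ ≠ 0 := by
    intro h
    have := DK.ϖ_pos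
    rw [h, DK.a_zero] at this
    exact lt_irrefl 0 this
  set ϖK : L := algebraMap K L DK.ϖ with hϖK_def
  have hϖKL : ϖK ≠ 0 := by
    simpa [hϖK_def] using (map_ne_zero (algebraMap K L)).mpr hϖK
  set x' : L := x * ϖK ^ (-k) with hx'_def
  -- value of x'
  have haϖK : DL.a ϖK = c ^ (p:ℕ) := htot
  have hax' : DL.a x' = c ^ (m - (p:ℤ) * k) := by
    rw [hx'_def, DL.a_mul, hm, DL.a_zpow _ hϖKL, haϖK, ← zpow_natCast c p,
      ← zpow_mul, ← zpow_add₀ (ne_of_gt hc)]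
    congr 1
    ring
  -- apply the different bound
  have hle : DL.a x' ≤ DL.a DL.ϖ ^ (-(dd : ℤ)) := by
    rw [hax', ← hc_def, ← Real.rpow_intCast c (m - (p:ℤ) * k),
      ← Real.rpow_intCast c (-(dd:ℤ))]
    apply Real.rpow_le_rpow_of_exponent_ge hc hc1.le
    have h1 : -(dd:ℤ) ≤ m - (p:ℤ) * k := by omega
    exact_mod_cast h1
  have htr1 : DK.a (Algebra.trace K L x') ≤ 1 := by
    have h := ((hdd x').mpr hle) 1 (by rw [DL.a_one])
    rwa [mul_one] at h
  -- decompose the trace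
  have hxdec : x = DK.ϖ ^ k • x' := by
    rw [Algebra.smul_def, map_zpow₀, hx'_def, ← hϖK_def]
    rw [zpow_neg, mul_comm ((algebraMap K L) DK.ϖ ^ k), mul_assoc,
      inv_mul_cancel₀ (zpow_ne_zero _ hϖKL), mul_one]
  have htr : Algebra.trace K L x = DK.ϖ ^ k * Algebra.trace K L x' := by
    conv_lhs => rw [hxdec]
    rw [map_smul, smul_eq_mul]
  have haϖ : DK.a DK.ϖ = c ^ (p:ℕ) := by rw [← hcompat, ← hϖK_def, haϖK]
  have hbnd : DK.a (Algebra.trace K L x) ≤ c ^ ((p:ℤ) * k) := by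
    rw [htr, DK.a_mul, DK.a_zpow _ hϖK, haϖ, ← zpow_natCast c p, ← zpow_mul]
    calc (c ^ ((p:ℤ) * k)) * DK.a (Algebra.trace K L x')
        ≤ (c ^ ((p:ℤ) * k)) * 1 := by
          apply mul_le_mul_of_nonneg_left htr1 (zpow_nonneg hc.le _)
      _ = c ^ ((p:ℤ) * k) := mul_one _
  -- convert RHS to rpow and conclude
  have hRHS : DL.a ((p : L)) ^ s * DL.a x = c ^ (((eL : ℝ) * s + (m:ℝ))) := by
    rw [heL, hm, ← hc_def, ← Real.rpow_natCast c eL, ← Real.rpow_mul hc.le,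
      ← Real.rpow_intCast c m, ← Real.rpow_add hc]
  rw [hRHS]
  calc DK.a (Algebra.trace K L x) ≤ c ^ ((p:ℤ) * k) := hbnd
    _ = c ^ ((((p:ℤ) * k : ℤ)) : ℝ) := (Real.rpow_intCast c _).symm
    _ ≤ c ^ ((eL : ℝ) * s + (m:ℝ)) := by
        apply Real.rpow_le_rpow_of_exponent_ge hc hc1.le
        have h1 : (p:ℤ) * k = m + dd - r := by omega
        rw [show ((p:ℤ) * k : ℤ) = m + dd - r from h1]
        have h2 : (r:ℝ) ≤ (p:ℝ) - 1 := by
          have h3 : r ≤ (p:ℤ) - 1 := by omega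
          exact_mod_cast h3
        push_cast
        linarith [hbound]
end

section
/- Let p be a prime and let K = K_0 ⊂ K_1 ⊂ ⋯ ⊂ K_n be a sufficiently ramified tower of local fields of characteristic (0,p); assume moreover that K_n/K is Galois with Gal(K_n/K) cyclic of order p^n generated by σ, and that K_m is the fixed field of σ^{p^m} for each 0 ≤ m ≤ n. Let t = p^{−n}·tr_{K_n/K} : K_n → K be the normalized trace. Then for every x ∈ K_n one has v(x − t(x)) ≥ v(σ(x) − x) − 1 − Σ_{k=2}^{n} p^{−k}; in particular v(x − t(x)) ≥ v(σ(x) − x) − 1 − 1/(p(p−1)). -/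
/-- The normalized trace `t = p⁻ⁿ · tr_{K_n/K}` for a Galois extension `L = K_n` of `K`
whose Galois group is cyclic of order `pⁿ` generated by `σ`:
`t x = p⁻ⁿ ∑_{j < pⁿ} σʲ x`. -/
noncomputable def normTrace (p n : ℕ) {K L : Type*} [Field K] [Field L] [Algebra K L]
    (σ : L ≃ₐ[K] L) (x : L) : L :=
  ((p : L) ^ n)⁻¹ * ∑ j ∈ Finset.range (p ^ n), (σ ^ j) x


open Finset

section Helpers

variable {p : ℕ} {L : Type*} [Field L]

lemma nt_a_nonneg (D : LocalFieldData p L) (x : L) : 0 ≤ D.a x := by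
  rcases eq_or_ne x 0 with h | h
  · simp [h, D.a_zero]
  · exact (D.a_pos x h).le

lemma nt_a_one (D : LocalFieldData p L) : D.a 1 = 1 := by
  have h := D.a_mul 1 1
  rw [mul_one] at h
  have h1 : 0 < D.a 1 := D.a_pos 1 one_ne_zero
  nlinarith

lemma nt_a_neg (D : LocalFieldData p L) (x : L) : D.a (-x) = D.a x := by
  have h := D.a_mul (-1) (-1)
  rw [neg_mul_neg, one_mul, nt_a_one] at h
  have h1 : 0 < D.a (-1) := D.a_pos _ (by norm_num)
  have h2 : D.a (-1) = 1 := by nlinarith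
  calc D.a (-x) = D.a ((-1) * x) := by rw [neg_one_mul]
    _ = D.a (-1) * D.a x := D.a_mul _ _
    _ = D.a x := by rw [h2, one_mul]

lemma nt_a_sub (D : LocalFieldData p L) (x y : L) :
    D.a (x - y) ≤ max (D.a x) (D.a y) := by
  have := D.a_add x (-y)
  rwa [← sub_eq_add_neg, nt_a_neg] at this

lemma nt_a_inv (D : LocalFieldData p L) {x : L} (hx : x ≠ 0) :
    D.a x⁻¹ = (D.a x)⁻¹ := by
  have h : D.a x * D.a x⁻¹ = 1 := by
    rw [← D.a_mul, mul_inv_cancel₀ hx, nt_a_one]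
  have hx0 : D.a x ≠ 0 := (D.a_pos x hx).ne'
  field_simp [mul_comm] at h ⊢
  linarith [h]

lemma nt_a_pow (D : LocalFieldData p L) (x : L) (k : ℕ) :
    D.a (x ^ k) = D.a x ^ k := by
  induction k with
  | zero => simp [nt_a_one]
  | succ k ih => rw [pow_succ, pow_succ, D.a_mul, ih]

lemma nt_a_zpow (D : LocalFieldData p L) {x : L} (hx : x ≠ 0) (k : ℤ) :
    D.a (x ^ k) = D.a x ^ k := by
  cases k with
  | ofNat k => simp [zpow_natCast, nt_a_pow]
  | negSucc k =>
      rw [zpow_negSucc, zpow_negSucc, nt_a_inv D (pow_ne_zero _ hx), nt_a_pow]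

lemma nt_a_sum_le (D : LocalFieldData p L) {ι : Type*} (s : Finset ι) (f : ι → L)
    {C : ℝ} (hC : 0 ≤ C) (h : ∀ i ∈ s, D.a (f i) ≤ C) :
    D.a (∑ i ∈ s, f i) ≤ C := by
  classical
  induction s using Finset.cons_induction with
  | empty => simpa [D.a_zero] using hC
  | cons a s ha ih =>
      rw [Finset.sum_cons]
      refine le_trans (D.a_add _ _) (max_le (h a (Finset.mem_cons_self a s)) ?_)
      exact ih fun i hi => h i (Finset.mem_cons.mpr (Or.inr hi))

variable {K : Type*} [Field K] [Algebra K L]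

lemma nt_pow_apply_add (σ : L ≃ₐ[K] L) (a b : ℕ) (y : L) :
    (σ ^ (a + b)) y = (σ ^ a) ((σ ^ b) y) := by
  rw [pow_add, AlgEquiv.mul_apply]

lemma nt_pow_apply_comm (σ : L ≃ₐ[K] L) (a b : ℕ) (y : L) :
    (σ ^ a) ((σ ^ b) y) = (σ ^ b) ((σ ^ a) y) := by
  rw [← nt_pow_apply_add, add_comm, nt_pow_apply_add]

lemma nt_fix_pow {σ : L ≃ₐ[K] L} {a : ℕ} {y : L} (h : (σ ^ a) y = y) (b : ℕ) :
    ((σ ^ a) ^ b) y = y := by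
  induction b with
  | zero => simp
  | succ b ih => rw [pow_succ, AlgEquiv.mul_apply, h, ih]

lemma nt_fix_mul {σ : L ≃ₐ[K] L} {a : ℕ} {y : L} (h : (σ ^ a) y = y) (b : ℕ) :
    (σ ^ (a * b)) y = y := by
  rw [pow_mul]; exact nt_fix_pow h b

lemma nt_shift_sum {σ : L ≃ₐ[K] L} {N : ℕ} {y : L} (h : (σ ^ N) y = y) :
    σ (∑ j ∈ Finset.range N, (σ ^ j) y) = ∑ j ∈ Finset.range N, (σ ^ j) y := by
  rw [map_sum]
  have h1 : ∀ j, σ ((σ ^ j) y) = (σ ^ (j + 1)) y := fun j => by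
    rw [pow_succ', AlgEquiv.mul_apply]
  simp only [h1]
  have h2 := Finset.sum_range_succ' (fun j => (σ ^ j) y) N
  have h3 := Finset.sum_range_succ (fun j => (σ ^ j) y) N
  simp only [pow_zero, AlgEquiv.one_apply] at h2
  rw [h] at h3
  have h4 := h2.symm.trans h3
  exact add_right_cancel h4

lemma nt_pow_sub_eq_sum (σ : L ≃ₐ[K] L) (N : ℕ) (y : L) :
    (σ ^ N) y - y = ∑ i ∈ Finset.range N, (σ ^ i) (σ y - y) := by
  induction N with
  | zero => simp
  | succ N ih =>
      rw [Finset.sum_range_succ, ← ih, map_sub]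
      have : (σ ^ N) (σ y) = (σ ^ (N + 1)) y := by
        rw [pow_succ, AlgEquiv.mul_apply]
      rw [this]; ring

lemma nt_sum_range_mul_decomp {M : Type*} [AddCommMonoid M] (f : ℕ → M) (a b : ℕ) :
    ∑ k ∈ Finset.range (a * b), f k
      = ∑ i ∈ Finset.range b, ∑ j ∈ Finset.range a, f (a * i + j) := by
  induction b with
  | zero => simp
  | succ b ih =>
      rw [Finset.sum_range_succ, ← ih, Nat.mul_succ, Finset.sum_range_add]

end Helpers


noncomputable def XfA (p n : ℕ) {K L : Type*} [Field K] [Field L] [Algebra K L]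
    (σ : L ≃ₐ[K] L) (m : ℕ) (y : L) : L :=
  ((p : L) ^ (n - m))⁻¹ * ∑ j ∈ Finset.range (p ^ (n - m)), (σ ^ (p ^ m * j)) y

section XfLemmas

variable {K L : Type*} [Field K] [Field L] [Algebra K L] (σ : L ≃ₐ[K] L)

lemma XfA_top (p n : ℕ) {m : ℕ} (hm : n ≤ m) (y : L) : XfA p n σ m y = y := by
  simp [XfA, Nat.sub_eq_zero_of_le hm]

lemma XfA_zero (p n : ℕ) (y : L) : XfA p n σ 0 y = normTrace p n σ y := by
  simp [XfA, normTrace]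

lemma XfA_comp (p n : ℕ) {m : ℕ} (hm : m < n) (y : L) :
    XfA p n σ m y
      = (p : L)⁻¹ * ∑ j ∈ Finset.range p, (σ ^ (p ^ m * j)) (XfA p n σ (m + 1) y) := by
  have hN : n - m = (n - (m + 1)) + 1 := by omega
  set N := n - (m + 1) with hNdef
  have hmap : ∀ j : ℕ, (σ ^ (p ^ m * j)) (XfA p n σ (m + 1) y)
      = ((p : L) ^ N)⁻¹
          * ∑ i ∈ Finset.range (p ^ N), (σ ^ (p ^ m * j + p ^ (m + 1) * i)) y := by
    intro j
    unfold XfA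
    rw [map_mul, map_inv₀, map_pow, map_natCast, map_sum]
    congr 1
    refine Finset.sum_congr rfl fun i _ => ?_
    exact (nt_pow_apply_add σ _ _ y).symm
  simp only [hmap]
  rw [← Finset.mul_sum]
  unfold XfA
  rw [hN]
  rw [show ((p : L) ^ (N + 1))⁻¹ = (p : L)⁻¹ * ((p : L) ^ N)⁻¹ by
    rw [pow_succ', mul_inv]]
  rw [show p ^ (N + 1) = p * p ^ N from pow_succ' p N]
  rw [nt_sum_range_mul_decomp (fun k => (σ ^ (p ^ m * k)) y) p (p ^ N)]
  rw [Finset.sum_comm]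
  rw [mul_assoc]
  congr 2
  refine Finset.sum_congr rfl fun j _ => Finset.sum_congr rfl fun i _ => ?_
  have : p ^ m * (p * i + j) = p ^ m * j + p ^ (m + 1) * i := by ring
  rw [this]

lemma XfA_fixed (p n : ℕ) (hσord : σ ^ (p ^ n) = 1) {m : ℕ} (hm : m ≤ n) (y : L) :
    (σ ^ (p ^ m)) (XfA p n σ m y) = XfA p n σ m y := by
  unfold XfA
  rw [map_mul, map_inv₀, map_pow, map_natCast]
  congr 1
  have hτ : ∀ j : ℕ, (σ ^ (p ^ m * j)) y = ((σ ^ (p ^ m)) ^ j) y := fun j => by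
    rw [← pow_mul]
  simp only [hτ]
  refine nt_shift_sum ?_
  rw [← pow_mul, show p ^ m * p ^ (n - m) = p ^ n by rw [← pow_add]; congr 1; omega,
    hσord, AlgEquiv.one_apply]

lemma XfA_commute (p n : ℕ) (a : ℕ) (m : ℕ) (y : L) :
    (σ ^ a) (XfA p n σ m y) = XfA p n σ m ((σ ^ a) y) := by
  unfold XfA
  rw [map_mul, map_inv₀, map_pow, map_natCast, map_sum]
  congr 1
  exact Finset.sum_congr rfl fun j _ => nt_pow_apply_comm σ a (p ^ m * j) y

lemma XfA_sub (p n : ℕ) (m : ℕ) (y z : L) :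
    XfA p n σ m y - XfA p n σ m z = XfA p n σ m (y - z) := by
  unfold XfA
  rw [← mul_sub, ← Finset.sum_sub_distrib]
  congr 1
  exact Finset.sum_congr rfl fun j _ => (map_sub _ _ _).symm

end XfLemmas

/-- Let `K = K_0 ⊂ K_1 ⊂ ⋯ ⊂ K_n` be a sufficiently ramified tower of
local fields of characteristic `(0,p)`, with `K_n/K` Galois with cyclic Galois group of
order `pⁿ` generated by `σ`, and `K_m` the fixed field of `σ^(p^m)`.  Let
`t = p⁻ⁿ · tr_{K_n/K}` be the normalized trace.  Then for every `x ∈ K_n`,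
`v(x - t x) ≥ v(σ x - x) - 1 - ∑_{k=2}^{n} p⁻ᵏ`; in particular
`v(x - t x) ≥ v(σ x - x) - 1 - 1/(p(p-1))`.  (Multiplicative formulation via the
absolute value `a`, with `|x - t x| ≤ |p| ^ (-(1 + ∑)) * |σ x - x|`.)

Here membership of `x` in `K_m` is encoded by `(σ ^ p ^ m) x = x` (the fixed field of
`σ^(p^m)`), the relative trace `tr_{K_m/K_{m-1}}` by `∑_{j < p} σ^(p^(m-1) j)`, and
the condition `v_{K_m}(𝒟_{K_m/K_{m-1}}) ≥ e_K (p^m - 1) + (p - 1)` of a sufficiently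
ramified tower is encoded through the trace-dual characterization of the different. -/
theorem normalized_trace_approximation
    (p n : ℕ) (hp : p.Prime) (hn : 1 ≤ n)
    (K L : Type*) [Field K] [Field L] [CharZero K] [CharZero L] [Algebra K L]
    [IsGalois K L] [FiniteDimensional K L]
    (hdeg : Module.finrank K L = p ^ n)
    (σ : L ≃ₐ[K] L) (hσ : orderOf σ = p ^ n)
    (D : LocalFieldData p L)
    (hinv : ∀ x : L, D.a (σ x) = D.a x)
    (ϖ : ℕ → L)
    (hϖmem : ∀ m ≤ n, (σ ^ p ^ m) (ϖ m) = ϖ m)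
    (hϖpos : ∀ m ≤ n, 0 < D.a (ϖ m))
    (hϖ1 : ∀ m ≤ n, D.a (ϖ m) < 1)
    (hdisc : ∀ m ≤ n, ∀ x : L, (σ ^ p ^ m) x = x → x ≠ 0 → ∃ k : ℤ, D.a x = D.a (ϖ m) ^ k)
    (e : ℕ) (he1 : 1 ≤ e) (he : D.a ((p : L)) = D.a (ϖ 0) ^ e)
    (htot : ∀ m : ℕ, 1 ≤ m → m ≤ n → D.a (ϖ (m - 1)) = D.a (ϖ m) ^ p)
    (hdiff : ∀ m : ℕ, 1 ≤ m → m ≤ n → ∃ dd : ℕ,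
      ((e : ℝ) * ((p : ℝ) ^ m - 1) + ((p : ℝ) - 1) ≤ (dd : ℝ)) ∧
      ∀ x : L, (σ ^ p ^ m) x = x →
        ((∀ y : L, (σ ^ p ^ m) y = y → D.a y ≤ 1 →
            D.a (∑ j ∈ Finset.range p, (σ ^ (p ^ (m - 1) * j)) (x * y)) ≤ 1) ↔
          D.a x ≤ D.a (ϖ m) ^ (-(dd : ℤ)))) :
    ∀ x : L,
      D.a (x - normTrace p n σ x) ≤
          D.a ((p : L)) ^ (-(1 + ∑ k ∈ Finset.Icc 2 n, ((p : ℝ))⁻¹ ^ k)) * D.a (σ x - x) ∧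
        D.a (x - normTrace p n σ x) ≤
          D.a ((p : L)) ^ (-(1 + ((p : ℝ) * ((p : ℝ) - 1))⁻¹)) * D.a (σ x - x) := by
  intro x
  have hp0L : (p : L) ≠ 0 := Nat.cast_ne_zero.mpr hp.pos.ne'
  have hc0 : 0 < D.a ((p : L)) := D.a_pos _ hp0L
  have hc1 : D.a ((p : L)) < 1 := D.res_char
  set c := D.a ((p : L)) with hcdef
  set r : ℝ := ((p : ℝ))⁻¹ with hrdef
  have hp2 : (2 : ℝ) ≤ (p : ℝ) := by exact_mod_cast hp.two_le
  have hpR0 : (0 : ℝ) < (p : ℝ) := by linarith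
  have hr0 : 0 < r := by rw [hrdef]; positivity
  have hr1 : r < 1 := by rw [hrdef]; rw [inv_lt_one_iff₀]; right; linarith
  have hσord : σ ^ (p ^ n) = 1 := by rw [← hσ]; exact pow_orderOf_eq_one σ
  have hainv : ∀ (k : ℕ) (z : L), D.a ((σ ^ k) z) = D.a z := by
    intro k
    induction k with
    | zero => intro z; simp
    | succ k ih => intro z; rw [pow_succ, AlgEquiv.mul_apply, ih, hinv]
  have hA0 : ∀ m : ℕ, m ≤ n → D.a (ϖ 0) = D.a (ϖ m) ^ (p ^ m) := by
    intro m
    induction m with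
    | zero => intro _; simp
    | succ m ih =>
        intro hm
        have h1 := htot (m + 1) (by omega) hm
        rw [Nat.add_sub_cancel] at h1
        rw [ih (by omega), h1, ← pow_mul, ← pow_succ']
  have hcA : ∀ m : ℕ, m ≤ n → c = D.a (ϖ m) ^ (e * p ^ m) := by
    intro m hm
    rw [he, hA0 m hm, ← pow_mul, Nat.mul_comm]
  -- The key trace estimate coming from the different bound
  have TrEst : ∀ m : ℕ, m < n → ∀ u : L, (σ ^ p ^ (m + 1)) u = u →
      D.a (∑ j ∈ Finset.range p, (σ ^ (p ^ m * j)) u)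
        ≤ D.a u * (c * c ^ (-(r ^ (m + 1)))) := by
    intro m hm u hu
    have hApos : 0 < D.a (ϖ (m + 1)) := hϖpos (m + 1) (by omega)
    have hA1 : D.a (ϖ (m + 1)) < 1 := hϖ1 (m + 1) (by omega)
    have hBpos : 0 < D.a (ϖ m) := hϖpos m (by omega)
    have hB1 : D.a (ϖ m) < 1 := hϖ1 m (by omega)
    have hBA : D.a (ϖ m) = D.a (ϖ (m + 1)) ^ p := by
      have h1 := htot (m + 1) (by omega) (by omega)
      rwa [Nat.add_sub_cancel] at h1
    have hRHS0 : 0 ≤ D.a u * (c * c ^ (-(r ^ (m + 1)))) :=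
      mul_nonneg (nt_a_nonneg D u) (mul_nonneg hc0.le (Real.rpow_nonneg hc0.le _))
    by_cases hTr0 : (∑ j ∈ Finset.range p, (σ ^ (p ^ m * j)) u) = 0
    · rw [hTr0, D.a_zero]; exact hRHS0
    have hu0 : u ≠ 0 := by
      rintro rfl
      exact hTr0 (Finset.sum_eq_zero fun j _ => map_zero _)
    obtain ⟨iu, hiu⟩ := hdisc (m + 1) (by omega) u hu hu0
    have hTrfix : (σ ^ p ^ m) (∑ j ∈ Finset.range p, (σ ^ (p ^ m * j)) u)
        = ∑ j ∈ Finset.range p, (σ ^ (p ^ m * j)) u := by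
      have hτ : ∀ j : ℕ, (σ ^ (p ^ m * j)) u = ((σ ^ p ^ m) ^ j) u := fun j => by
        rw [← pow_mul]
      simp only [hτ]
      refine nt_shift_sum ?_
      rw [← pow_mul, ← pow_succ]
      exact hu
    obtain ⟨jt, hjt⟩ := hdisc m (by omega) _ hTrfix hTr0
    have hϖm0 : ϖ m ≠ 0 := by
      intro h
      have h2 := hϖpos m (by omega)
      rw [h, D.a_zero] at h2
      exact lt_irrefl _ h2
    obtain ⟨d, hd1, hd2⟩ := hdiff (m + 1) (by omega) (by omega)
    rw [Nat.add_sub_cancel] at hd2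
    have key : (iu : ℤ) + d < p * (jt + 1) := by
      by_contra hcon
      push_neg at hcon
      have hϖfixm1 : (σ ^ p ^ (m + 1)) (ϖ m) = ϖ m := by
        have h3 := nt_fix_mul (hϖmem m (by omega)) p
        rwa [← pow_succ] at h3
      have hy0fix : (σ ^ p ^ (m + 1)) (ϖ m ^ (-(jt + 1) : ℤ)) = ϖ m ^ (-(jt + 1) : ℤ) := by
        rw [map_zpow₀, hϖfixm1]
      have hx'fix : (σ ^ p ^ (m + 1)) (u * ϖ m ^ (-(jt + 1) : ℤ))
          = u * ϖ m ^ (-(jt + 1) : ℤ) := by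
        rw [map_mul, hu, hy0fix]
      have hx'val : D.a (u * ϖ m ^ (-(jt + 1) : ℤ)) ≤ D.a (ϖ (m + 1)) ^ (-(d : ℤ)) := by
        rw [D.a_mul, hiu, nt_a_zpow D hϖm0, hBA, ← zpow_natCast (D.a (ϖ (m + 1))) p,
          ← zpow_mul, ← zpow_add₀ hApos.ne']
        refine zpow_le_zpow_right_of_le_one₀ hApos hA1.le ?_
        have hexp : (iu : ℤ) + (p : ℤ) * (-(jt + 1)) = iu - (p : ℤ) * (jt + 1) := by ring
        rw [hexp]
        linarith [hcon]
      have happ := (hd2 (u * ϖ m ^ (-(jt + 1) : ℤ)) hx'fix).mpr hx'val 1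
        (by rw [map_one]) (le_of_eq (nt_a_one D))
      rw [mul_one] at happ
      have hsum : ∑ j' ∈ Finset.range p, (σ ^ (p ^ m * j')) (u * ϖ m ^ (-(jt + 1) : ℤ))
          = (∑ j' ∈ Finset.range p, (σ ^ (p ^ m * j')) u) * ϖ m ^ (-(jt + 1) : ℤ) := by
        rw [Finset.sum_mul]
        refine Finset.sum_congr rfl fun j' _ => ?_
        rw [map_mul, map_zpow₀, nt_fix_mul (hϖmem m (by omega)) j']
      rw [hsum, D.a_mul, hjt, nt_a_zpow D hϖm0, ← zpow_add₀ hBpos.ne'] at happ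
      have hexp : (jt : ℤ) + (-(jt + 1)) = -1 := by ring
      rw [hexp, zpow_neg_one] at happ
      nlinarith [mul_inv_cancel₀ hBpos.ne', happ, hB1, hBpos]
    have h1 : D.a (∑ j' ∈ Finset.range p, (σ ^ (p ^ m * j')) u)
        ≤ D.a (ϖ (m + 1)) ^ ((iu : ℤ) + d + 1 - p) := by
      rw [hjt, hBA, ← zpow_natCast (D.a (ϖ (m + 1))) p, ← zpow_mul]
      refine zpow_le_zpow_right_of_le_one₀ hApos hA1.le ?_
      have hexp : (p : ℤ) * (jt + 1) = (p : ℤ) * jt + p := by ring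
      rw [hexp] at key
      linarith [key]
    have hexp2 : D.a (ϖ (m + 1)) ^ ((iu : ℤ) + d + 1 - p)
        = D.a (ϖ (m + 1)) ^ ((iu : ℝ)) * D.a (ϖ (m + 1)) ^ (((d : ℝ) + 1 - p)) := by
      rw [← Real.rpow_intCast (D.a (ϖ (m + 1))) ((iu : ℤ) + d + 1 - p),
        ← Real.rpow_add hApos]
      congr 1
      push_cast
      ring
    have hE : D.a (ϖ (m + 1)) ^ (((d : ℝ) + 1 - p)) ≤ c * c ^ (-(r ^ (m + 1))) := by
      have hstep1 : D.a (ϖ (m + 1)) ^ (((d : ℝ) + 1 - p))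
          ≤ D.a (ϖ (m + 1)) ^ ((e : ℝ) * ((p : ℝ) ^ (m + 1) - 1)) :=
        Real.rpow_le_rpow_of_exponent_ge hApos hA1.le (by linarith [hd1])
      refine le_trans hstep1 (le_of_eq ?_)
      have hcA' : c = D.a (ϖ (m + 1)) ^ (((e * p ^ (m + 1) : ℕ) : ℝ)) := by
        rw [Real.rpow_natCast]
        exact hcA (m + 1) (by omega)
      have hpne : (p : ℝ) ≠ 0 := by linarith
      have hrm : ((p : ℝ) ^ (m + 1)) * (r ^ (m + 1)) = 1 := by
        rw [hrdef, ← mul_pow, mul_inv_cancel₀ hpne, one_pow]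
      rw [hcA', ← Real.rpow_mul hApos.le, ← Real.rpow_add hApos]
      congr 1
      push_cast
      linear_combination (e : ℝ) * hrm
    calc D.a (∑ j ∈ Finset.range p, (σ ^ (p ^ m * j)) u)
        ≤ D.a (ϖ (m + 1)) ^ ((iu : ℤ) + d + 1 - p) := h1
      _ = D.a (ϖ (m + 1)) ^ ((iu : ℝ)) * D.a (ϖ (m + 1)) ^ (((d : ℝ) + 1 - p)) := hexp2
      _ ≤ D.a (ϖ (m + 1)) ^ ((iu : ℝ)) * (c * c ^ (-(r ^ (m + 1)))) := by
          exact mul_le_mul_of_nonneg_left hE (Real.rpow_nonneg hApos.le _)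
      _ = D.a u * (c * c ^ (-(r ^ (m + 1)))) := by
          rw [Real.rpow_intCast, ← hiu]
  -- norm estimate for the partial normalized traces
  have XfEst : ∀ i : ℕ, i ≤ n → ∀ y : L,
      D.a (XfA p n σ (n - i) y)
        ≤ D.a y * c ^ (-(∑ k ∈ Finset.Ioc (n - i) n, r ^ k)) := by
    intro i
    induction i with
    | zero =>
        intro _ y
        simp only [Nat.sub_zero]
        rw [XfA_top σ p n (le_refl n) y, Finset.Ioc_self, Finset.sum_empty, neg_zero,
          Real.rpow_zero, mul_one]
    | succ i ih =>
        intro hi y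
        have hm : n - (i + 1) < n := by omega
        set m := n - (i + 1) with hmdef
        have hm1 : m + 1 = n - i := by omega
        have hfix : (σ ^ p ^ (m + 1)) (XfA p n σ (m + 1) y) = XfA p n σ (m + 1) y :=
          XfA_fixed σ p n hσord (by omega) y
        have h1 := TrEst m hm (XfA p n σ (m + 1) y) hfix
        have h2 := ih (by omega) y
        rw [← hm1] at h2
        rw [XfA_comp σ p n hm y, D.a_mul, nt_a_inv D hp0L]
        have hsplit : ∑ k ∈ Finset.Ioc m n, r ^ k
            = r ^ (m + 1) + ∑ k ∈ Finset.Ioc (m + 1) n, r ^ k := by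
          rw [← Finset.Icc_add_one_left_eq_Ioc, Finset.Icc_eq_cons_Ioc (by omega), Finset.sum_cons]
        calc c⁻¹ * D.a (∑ j ∈ Finset.range p, (σ ^ (p ^ m * j)) (XfA p n σ (m + 1) y))
            ≤ c⁻¹ * (D.a (XfA p n σ (m + 1) y) * (c * c ^ (-(r ^ (m + 1))))) :=
              mul_le_mul_of_nonneg_left h1 (inv_nonneg.mpr hc0.le)
          _ ≤ c⁻¹ * ((D.a y * c ^ (-(∑ k ∈ Finset.Ioc (m + 1) n, r ^ k)))
                * (c * c ^ (-(r ^ (m + 1))))) := by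
              refine mul_le_mul_of_nonneg_left
                (mul_le_mul_of_nonneg_right h2
                  (mul_nonneg hc0.le (Real.rpow_nonneg hc0.le _)))
                (inv_nonneg.mpr hc0.le)
          _ = D.a y * c ^ (-(∑ k ∈ Finset.Ioc m n, r ^ k)) := by
              rw [hsplit, neg_add, Real.rpow_add hc0]
              field_simp
  have XfEst' : ∀ m : ℕ, m ≤ n → ∀ y : L,
      D.a (XfA p n σ m y) ≤ D.a y * c ^ (-(∑ k ∈ Finset.Ioc m n, r ^ k)) := by
    intro m hm y
    have h := XfEst (n - m) (by omega) y
    rwa [show n - (n - m) = m by omega] at h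
  have hS0 : (0 : ℝ) ≤ ∑ k ∈ Finset.Icc 2 n, r ^ k :=
    Finset.sum_nonneg fun k _ => pow_nonneg hr0.le k
  set S := ∑ k ∈ Finset.Icc 2 n, r ^ k with hSdef
  set w := D.a (σ x - x) with hwdef
  have hw0 : 0 ≤ w := nt_a_nonneg D _
  have hCpos : 0 ≤ c ^ (-(1 + S)) * w := mul_nonneg (Real.rpow_nonneg hc0.le _) hw0
  -- per-term estimate
  have term : ∀ i : ℕ, i < n →
      D.a (XfA p n σ (i + 1) x - XfA p n σ i x) ≤ c ^ (-(1 + S)) * w := by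
    intro i hi
    have hτa : ∀ (k : ℕ) (z : L), D.a (((σ ^ p ^ i) ^ k) z) = D.a z := by
      intro k z; rw [← pow_mul, hainv]
    have hdiffid : XfA p n σ (i + 1) x - XfA p n σ i x
        = (p : L)⁻¹ * ∑ j ∈ Finset.range p,
            (XfA p n σ (i + 1) x - (σ ^ (p ^ i * j)) (XfA p n σ (i + 1) x)) := by
      rw [XfA_comp σ p n hi x, Finset.sum_sub_distrib, mul_sub, Finset.sum_const,
        Finset.card_range, nsmul_eq_mul, ← mul_assoc, inv_mul_cancel₀ hp0L, one_mul]
    have hterm1 : ∀ j ∈ Finset.range p,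
        D.a (XfA p n σ (i + 1) x - (σ ^ (p ^ i * j)) (XfA p n σ (i + 1) x))
          ≤ D.a ((σ ^ p ^ i) (XfA p n σ (i + 1) x) - XfA p n σ (i + 1) x) := by
      intro j _
      have hneg : XfA p n σ (i + 1) x - (σ ^ (p ^ i * j)) (XfA p n σ (i + 1) x)
          = -((σ ^ (p ^ i * j)) (XfA p n σ (i + 1) x) - XfA p n σ (i + 1) x) := by ring
      rw [hneg, nt_a_neg, pow_mul, nt_pow_sub_eq_sum (σ ^ p ^ i) j (XfA p n σ (i + 1) x)]
      refine nt_a_sum_le D _ _ (nt_a_nonneg D _) fun k _ => ?_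
      rw [hτa]
    have hcomm : (σ ^ p ^ i) (XfA p n σ (i + 1) x) - XfA p n σ (i + 1) x
        = XfA p n σ (i + 1) ((σ ^ p ^ i) x - x) := by
      rw [XfA_commute σ p n (p ^ i) (i + 1) x, XfA_sub]
    have hτx : D.a ((σ ^ p ^ i) x - x) ≤ w := by
      rw [nt_pow_sub_eq_sum σ (p ^ i) x]
      exact nt_a_sum_le D _ _ hw0 fun k _ => le_of_eq (hainv k _)
    have hchain : D.a ((σ ^ p ^ i) (XfA p n σ (i + 1) x) - XfA p n σ (i + 1) x)
        ≤ w * c ^ (-(∑ k ∈ Finset.Ioc (i + 1) n, r ^ k)) := by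
      rw [hcomm]
      exact le_trans (XfEst' (i + 1) (by omega) _)
        (mul_le_mul_of_nonneg_right hτx (Real.rpow_nonneg hc0.le _))
    have hsub : ∑ k ∈ Finset.Ioc (i + 1) n, r ^ k ≤ S := by
      refine Finset.sum_le_sum_of_subset_of_nonneg ?_ fun k _ _ => pow_nonneg hr0.le k
      intro k hk
      simp only [Finset.mem_Ioc, Finset.mem_Icc] at hk ⊢
      omega
    have hfin : c⁻¹ * (w * c ^ (-(∑ k ∈ Finset.Ioc (i + 1) n, r ^ k)))
        ≤ c ^ (-(1 + S)) * w := by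
      have heq : c⁻¹ * (w * c ^ (-(∑ k ∈ Finset.Ioc (i + 1) n, r ^ k)))
          = c ^ (-(1 + ∑ k ∈ Finset.Ioc (i + 1) n, r ^ k)) * w := by
        rw [show -(1 + ∑ k ∈ Finset.Ioc (i + 1) n, r ^ k)
            = (-1) + (-(∑ k ∈ Finset.Ioc (i + 1) n, r ^ k)) by ring,
          Real.rpow_add hc0, Real.rpow_neg_one]
        ring
      rw [heq]
      refine mul_le_mul_of_nonneg_right ?_ hw0
      exact Real.rpow_le_rpow_of_exponent_ge hc0 hc1.le (by linarith [hsub])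
    rw [hdiffid, D.a_mul, nt_a_inv D hp0L]
    calc c⁻¹ * D.a (∑ j ∈ Finset.range p,
            (XfA p n σ (i + 1) x - (σ ^ (p ^ i * j)) (XfA p n σ (i + 1) x)))
        ≤ c⁻¹ * (w * c ^ (-(∑ k ∈ Finset.Ioc (i + 1) n, r ^ k))) := by
          refine mul_le_mul_of_nonneg_left ?_ (inv_nonneg.mpr hc0.le)
          exact le_trans (nt_a_sum_le D _ _ (nt_a_nonneg D _) hterm1) hchain
      _ ≤ c ^ (-(1 + S)) * w := hfin
  -- telescoping
  have tele : x - normTrace p n σ x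
      = ∑ i ∈ Finset.range n, (XfA p n σ (i + 1) x - XfA p n σ i x) := by
    rw [Finset.sum_range_sub (fun m => XfA p n σ m x) n]
    rw [XfA_top σ p n (le_refl n) x, XfA_zero σ p n x]
  have main1 : D.a (x - normTrace p n σ x) ≤ c ^ (-(1 + S)) * w := by
    rw [tele]
    exact nt_a_sum_le D _ _ hCpos fun i hi => term i (Finset.mem_range.mp hi)
  refine ⟨main1, le_trans main1 ?_⟩
  refine mul_le_mul_of_nonneg_right ?_ hw0
  refine Real.rpow_le_rpow_of_exponent_ge hc0 hc1.le ?_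
  have hP : ∀ N : ℕ, 1 ≤ N →
      (1 - r) * (∑ k ∈ Finset.Icc 2 N, r ^ k) = r ^ 2 - r ^ (N + 1) := by
    intro N
    induction N with
    | zero => intro h; omega
    | succ N ih =>
        intro _
        rcases Nat.eq_zero_or_pos N with h0 | h1
        · subst h0
          rw [Finset.Icc_eq_empty (by omega)]
          simp
        · rw [Finset.sum_Icc_succ_top (by omega : 2 ≤ N + 1), mul_add, ih h1]
          ring
  have hgeom : S ≤ ((p : ℝ) * ((p : ℝ) - 1))⁻¹ := by
    have h1r : 0 < 1 - r := by linarith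
    have h2 := hP n hn
    have h3 : (1 - r) * S ≤ r ^ 2 := by
      rw [hSdef, h2]
      have := pow_nonneg hr0.le (n + 1)
      linarith
    have h4 : S ≤ r ^ 2 / (1 - r) := by
      rw [le_div_iff₀ h1r]
      linarith [h3]
    refine le_trans h4 (le_of_eq ?_)
    rw [hrdef]
    have hp1 : (p : ℝ) - 1 ≠ 0 := by
      intro h; rw [sub_eq_zero] at h; linarith
    have hpne : (p : ℝ) ≠ 0 := by linarith
    field_simp
  linarith [hgeom]
end

section
/- Let K be a local field of characteristic (0,p) with valuation ring 𝒪_K, let r ≥ 0 and n ≥ 1 be integers, and let 0 → M₁ → M → M₂ → 0 be an exact sequence of 𝒪_K-modules in which M₁ is finite free of rank r and M₂ is killed by p^n. Then there exists an isomorphism of 𝒪_K-modules M ≅ 𝒪_K^{⊕r} ⊕ T, where T is killed by p^n. -/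
/-!
Since `pⁿ` kills `M₂`, multiplication by `pⁿ` on `M` factors as `f ∘ h` for some `h : M → M₁`,
and `h ∘ f` is multiplication by `pⁿ` on `M₁`. The image of `h` is a submodule of `M₁ ≅ 𝒪^r`
containing `pⁿ M₁`, hence free of rank `r` because `𝒪` is a principal ideal domain.
So `M` surjects onto a free module of rank `r` with kernel `ker h`, which is killed by `pⁿ`,
and the surjection splits.
-/

open LinearMap

theorem LinearMap.exists_comp_eq_smul_id_of_range_eq_ker {R M₁ M M₂ : Type*} [CommRing R]
    [AddCommGroup M₁] [Module R M₁] [AddCommGroup M] [Module R M] [AddCommGroup M₂] [Module R M₂]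
    {f : M₁ →ₗ[R] M} {g : M →ₗ[R] M₂}
    (hf : Function.Injective f) (hfg : range f = ker g) {a : R} (ha : ∀ x : M₂, a • x = 0) :
    ∃ h : M →ₗ[R] M₁, f ∘ₗ h = a • id ∧ h ∘ₗ f = a • id := by
  have hmem (x : M) : a • x ∈ range f := by rw [hfg, mem_ker, map_smul, ha]
  let h : M →ₗ[R] M₁ :=
    (LinearEquiv.ofInjective f hf).symm.toLinearMap ∘ₗ (a • id).codRestrict (range f) hmem
  have hfh : f ∘ₗ h = a • id :=
    LinearMap.ext fun x ↦ congrArg Subtype.val ((LinearEquiv.ofInjective f hf).apply_symm_apply _)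
  refine ⟨h, hfh, LinearMap.ext fun x ↦ hf ?_⟩
  simpa using LinearMap.congr_fun hfh (f x)

theorem Submodule.nonempty_linearEquiv_of_smul_mem {R F : Type*} [CommRing R] [IsDomain R]
    [IsPrincipalIdealRing R] [AddCommGroup F] [Module R F] [Module.Free R F]
    [Module.Finite R F] (N : Submodule R F) {a : R} (ha : a ≠ 0) (haN : ∀ x : F, a • x ∈ N) :
    Nonempty (N ≃ₗ[R] F) := by
  let smulInto : F →ₗ[R] N := (a • LinearMap.id).codRestrict N haN
  have hinj : Function.Injective smulInto := fun x y hxy ↦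
    smul_right_injective F ha (congrArg Subtype.val hxy)
  exact ⟨LinearEquiv.ofFinrankEq _ _ <|
    le_antisymm N.finrank_le (finrank_le_finrank_of_injective hinj)⟩

theorem LinearMap.nonempty_equiv_prod_ker_of_surjective {R M P : Type*} [Ring R]
    [AddCommGroup M] [Module R M] [AddCommGroup P] [Module R P] [Module.Projective R P]
    (φ : M →ₗ[R] P) (hφ : Function.Surjective φ) : Nonempty (M ≃ₗ[R] P × ker φ) := by
  obtain ⟨l, hl⟩ := Module.projective_lifting_property φ id hφ
  exact ⟨((exact_subtype_ker_map φ).splitSurjectiveEquiv (ker φ).injective_subtype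
    ⟨l, hl⟩).1.trans (LinearEquiv.prodComm R _ _)⟩

theorem exists_free_torsion_decomposition_general
    (p : ℕ) (hp : p.Prime)
    (O : Type*) [CommRing O] [IsDomain O] [IsDiscreteValuationRing O] [CharZero O]
    (r n : ℕ)
    (M₁ M M₂ : Type*) [AddCommGroup M₁] [Module O M₁] [AddCommGroup M] [Module O M]
    [AddCommGroup M₂] [Module O M₂]
    (f : M₁ →ₗ[O] M) (g : M →ₗ[O] M₂)
    (hf : Function.Injective f)
    (hfg : LinearMap.range f = LinearMap.ker g)
    (e₁ : M₁ ≃ₗ[O] (Fin r → O))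
    (h₂ : ∀ x : M₂, ((p : O) ^ n) • x = 0) :
    ∃ T : Submodule O M, (∀ x ∈ T, ((p : O) ^ n) • x = 0) ∧
      Nonempty (M ≃ₗ[O] ((Fin r → O) × T)) := by
  have hpn : (p : O) ^ n ≠ 0 := pow_ne_zero _ (Nat.cast_ne_zero.mpr hp.ne_zero)
  obtain ⟨h, hfh, hhf⟩ := exists_comp_eq_smul_id_of_range_eq_ker hf hfg h₂
  have : Module.Free O M₁ := .of_equiv e₁.symm
  have : Module.Finite O M₁ := .equiv e₁.symm
  obtain ⟨eN⟩ := (range h).nonempty_linearEquiv_of_smul_mem hpn fun x ↦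
    ⟨f x, LinearMap.congr_fun hhf x⟩
  let φ : M →ₗ[O] Fin r → O := (eN.trans e₁).toLinearMap ∘ₗ h.rangeRestrict
  obtain ⟨eM⟩ := φ.nonempty_equiv_prod_ker_of_surjective
    ((eN.trans e₁).surjective.comp h.surjective_rangeRestrict)
  refine ⟨ker φ, fun x hx ↦ ?_, ⟨eM⟩⟩
  have hx : h x = 0 := by simpa [φ, Subtype.ext_iff] using hx
  simpa [hx] using (LinearMap.congr_fun hfh x).symm

/-- Let `𝒪` be the valuation ring of a local field of characteristic
`(0,p)` (a complete discrete valuation ring of characteristic `0` in which `p` is a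
nonzero nonunit).  Given an exact sequence `0 → M₁ → M → M₂ → 0` of `𝒪`-modules with
`M₁` finite free of rank `r` and `M₂` killed by `pⁿ` (`n ≥ 1`), there is an isomorphism
`M ≅ 𝒪^r ⊕ T` with `T` killed by `pⁿ`. -/
theorem exists_free_torsion_decomposition
    (p : ℕ) (hp : p.Prime)
    (O : Type*) [CommRing O] [IsDomain O] [IsDiscreteValuationRing O] [CharZero O]
    (hpnonunit : ¬ IsUnit (p : O))
    (hcomplete : IsAdicComplete (IsLocalRing.maximalIdeal O) O)
    (r n : ℕ) (hn : 1 ≤ n)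
    (M₁ M M₂ : Type*) [AddCommGroup M₁] [Module O M₁] [AddCommGroup M] [Module O M]
    [AddCommGroup M₂] [Module O M₂]
    (f : M₁ →ₗ[O] M) (g : M →ₗ[O] M₂)
    (hf : Function.Injective f) (hg : Function.Surjective g)
    (hfg : LinearMap.range f = LinearMap.ker g)
    (e₁ : M₁ ≃ₗ[O] (Fin r → O))
    (h₂ : ∀ x : M₂, ((p : O) ^ n) • x = 0) :
    ∃ T : Submodule O M, (∀ x ∈ T, ((p : O) ^ n) • x = 0) ∧
      Nonempty (M ≃ₗ[O] ((Fin r → O) × T)) :=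
  exists_free_torsion_decomposition_general p hp O r n M₁ M M₂ f g hf hfg e₁ h₂
end

section
/- Let p be a prime, let 𝔽̄_p be an algebraic closure of the field 𝔽_p with p elements, and let W(𝔽̄_p) be the ring of p-typical Witt vectors of 𝔽̄_p, with F : W(𝔽̄_p) → W(𝔽̄_p) the Witt vector Frobenius. Then the additive map x ↦ F(x) − x is surjective, and its kernel is exactly the image of the canonical ring map W(𝔽_p) → W(𝔽̄_p) (so the kernel is isomorphic to ℤ_p). Consequently the continuous cohomology of Gal(𝔽̄_p/𝔽_p) acting on W(𝔽̄_p) is ℤ_p in degree 0 and vanishes in positive degrees. -/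
namespace FrobAux

open WittVector Polynomial

variable (p : ℕ) [hp : Fact p.Prime]
variable {k : Type*} [Field k] [CharP k p] [IsAlgClosed k]

local notation "𝕎" => WittVector p

theorem exists_AS (c : k) : ∃ a : k, a ^ p - a = c := by
  have hdeg : (X ^ p - (X + C c) : k[X]).degree = p := by
    rw [Polynomial.degree_sub_eq_left_of_degree_lt, degree_X_pow]
    rw [degree_X_pow]
    calc (X + C c : k[X]).degree ≤ 1 := by
          refine le_trans (degree_add_le _ _) ?_
          rw [degree_X]
          exact max_le le_rfl (degree_C_le.trans (by norm_num))
      _ < p := by exact_mod_cast hp.out.one_lt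
  obtain ⟨a, ha⟩ := IsAlgClosed.exists_root (X ^ p - (X + C c) : k[X]) (by
    rw [hdeg]; exact_mod_cast hp.out.ne_zero)
  refine ⟨a, ?_⟩
  have := ha
  simp only [IsRoot, eval_sub, eval_pow, eval_X, eval_add, eval_C, sub_eq_zero] at this
  rw [this]; ring

theorem sub_coeff_zero {R : Type*} [CommRing R] (a b : 𝕎 R) :
    (a - b).coeff 0 = a.coeff 0 - b.coeff 0 := by
  have h := add_coeff_zero (p := p) (a - b) b
  rw [sub_add_cancel] at h
  exact eq_sub_of_add_eq h.symm

theorem iterate_vers_coeff_lt {R : Type*} [CommRing R] (n : ℕ) (w : 𝕎 R) :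
    ∀ i < n, (verschiebung^[n] w).coeff i = 0 := by
  induction n with
  | zero => intro i hi; omega
  | succ n ih =>
    intro i hi
    rw [Function.iterate_succ_apply']
    match i with
    | 0 => exact verschiebung_coeff_zero _
    | j + 1 => rw [verschiebung_coeff_succ]; exact ih j (by omega)

theorem iterate_vers_sub {R : Type*} [CommRing R] (n : ℕ) (a b : 𝕎 R) :
    verschiebung^[n] (a - b) = verschiebung^[n] a - verschiebung^[n] b := by
  induction n with
  | zero => rfl
  | succ n ih => rw [Function.iterate_succ_apply', Function.iterate_succ_apply',
      Function.iterate_succ_apply', ih, map_sub]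

set_option linter.unusedSectionVars false

noncomputable def seq (y : 𝕎 k) : ℕ → 𝕎 k
  | 0 => 0
  | n + 1 =>
    seq y n - verschiebung^[n] (teichmuller p
      (Classical.choose (exists_AS p
        ((frobenius (seq y n) - seq y n - y).coeff n))))

theorem seq_spec (y : 𝕎 k) : ∀ n, ∀ i < n,
    (frobenius (seq p y n) - seq p y n - y).coeff i = 0 := by
  intro n
  induction n with
  | zero => intro i hi; omega
  | succ n ih =>
    intro i hi
    set x := seq p y n with hx
    set r := frobenius x - x - y with hr
    set a := Classical.choose (exists_AS p (r.coeff n)) with ha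
    have haspec : a ^ p - a = r.coeff n := Classical.choose_spec (exists_AS p (r.coeff n))
    set t := teichmuller p a with ht
    have hseq : seq p y (n + 1) = x - verschiebung^[n] t := rfl
    have hFV : frobenius (verschiebung^[n] t) = verschiebung^[n] (frobenius t) :=
      (verschiebung_frobenius_comm.iterate_left n t).symm
    have hr' : frobenius (seq p y (n + 1)) - seq p y (n + 1) - y
        = verschiebung^[n] (r.shift n - (frobenius t - t)) := by
      rw [hseq, map_sub, hFV, iterate_vers_sub, iterate_vers_sub,
        ← eq_iterate_verschiebung (ih)]
      ring
    rw [hr']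
    rcases Nat.lt_succ_iff_lt_or_eq.mp hi with h | rfl
    · exact iterate_vers_coeff_lt p n _ i h
    · have : (verschiebung^[i] (r.shift i - (frobenius t - t))).coeff (0 + i)
          = (r.shift i - (frobenius t - t)).coeff 0 := iterate_verschiebung_coeff _ _ _
      rw [zero_add] at this
      rw [this, sub_coeff_zero, sub_coeff_zero, shift_coeff, coeff_frobenius_charP,
        teichmuller_coeff_zero, Nat.add_zero, haspec]
      ring

theorem seq_trunc_stable (y : 𝕎 k) (n : ℕ) :
    truncate n (seq p y (n + 1)) = truncate n (seq p y n) := by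
  have h0 : truncate n ((verschiebung^[n] (teichmuller p
      (Classical.choose (exists_AS p
        ((frobenius (seq p y n) - seq p y n - y).coeff n))))) : 𝕎 k) = 0 := by
    apply TruncatedWittVector.ext
    intro i
    rw [coeff_truncate]
    simpa using iterate_vers_coeff_lt p n _ i i.2
  have : seq p y (n + 1) = seq p y n - _ := rfl
  rw [this, map_sub, h0, sub_zero]

theorem seq_coeff_stable (y : 𝕎 k) (i : ℕ) : ∀ n, i < n →
    (seq p y n).coeff i = (seq p y (i + 1)).coeff i := by
  intro n
  induction n with
  | zero => omega
  | succ n ih =>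
    intro hi
    rcases Nat.lt_succ_iff_lt_or_eq.mp hi with h | rfl
    · have := congrArg (fun z => TruncatedWittVector.coeff ⟨i, h⟩ z)
        (seq_trunc_stable p y n)
      simp only [coeff_truncate] at this
      rw [this]
      exact ih h
    · rfl

noncomputable def limit (y : 𝕎 k) : 𝕎 k :=
  WittVector.mk p fun n => (seq p y (n + 1)).coeff n

theorem limit_spec (y : 𝕎 k) : frobenius (limit p y) - limit p y = y := by
  have : frobenius (limit p y) - limit p y - y = 0 := by
    apply WittVector.ext
    intro n
    rw [zero_coeff]
    set L := limit p y with hL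
    set x := seq p y (n + 1) with hx
    have hcoeff : ∀ i, i < n + 1 → L.coeff i = x.coeff i := by
      intro i hi
      have h1 : L.coeff i = (seq p y (i + 1)).coeff i := congrFun (coeff_mk p _) i
      rw [h1, hx, seq_coeff_stable p y i (n + 1) hi]
    have htr : truncate (n + 1) (frobenius L - L - y)
        = truncate (n + 1) (frobenius x - x - y) := by
      have h1 : truncate (n + 1) L = truncate (n + 1) x :=
        TruncatedWittVector.ext fun i => by
          rw [coeff_truncate, coeff_truncate]; exact hcoeff i i.2
      have h2 : truncate (n + 1) (frobenius L) = truncate (n + 1) (frobenius x) :=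
        TruncatedWittVector.ext fun i => by
          rw [coeff_truncate, coeff_truncate, coeff_frobenius_charP,
            coeff_frobenius_charP, hcoeff i i.2]
      rw [map_sub, map_sub, map_sub, map_sub, h1, h2]
    have hc := congrArg (fun z => TruncatedWittVector.coeff ⟨n, Nat.lt_succ_self n⟩ z) htr
    simp only [coeff_truncate] at hc
    rw [hc]
    exact seq_spec p y (n + 1) n (Nat.lt_succ_self n)
  exact sub_eq_zero.mp this

theorem mem_range_of_pow_card (x : AlgebraicClosure (ZMod p)) (h : x ^ p = x) :
    x ∈ Set.range (algebraMap (ZMod p) (AlgebraicClosure (ZMod p))) := by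
  classical
  set f : (AlgebraicClosure (ZMod p))[X] := X ^ p - X with hf
  have hdeg : f.degree = p := by
    rw [hf, Polynomial.degree_sub_eq_left_of_degree_lt, degree_X_pow]
    rw [degree_X_pow, degree_X]
    exact_mod_cast hp.out.one_lt
  have hf0 : f ≠ 0 := by
    intro h0
    rw [h0, degree_zero] at hdeg
    simp at hdeg
  have hnat : f.natDegree = p := Polynomial.natDegree_eq_of_degree_eq_some hdeg
  set S : Finset (AlgebraicClosure (ZMod p)) := Finset.univ.image (algebraMap (ZMod p) (AlgebraicClosure (ZMod p))) with hS
  have hcardS : S.card = p := by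
    rw [hS, Finset.card_image_of_injective _ (algebraMap (ZMod p) (AlgebraicClosure (ZMod p))).injective,
      Finset.card_univ, ZMod.card]
  have hSroots : S ⊆ f.roots.toFinset := by
    intro z hz
    obtain ⟨a, _, rfl⟩ := Finset.mem_image.mp hz
    rw [Multiset.mem_toFinset, Polynomial.mem_roots hf0]
    simp only [IsRoot, hf, eval_sub, eval_pow, eval_X]
    rw [← map_pow, ZMod.pow_card, sub_self]
  have hcard : f.roots.toFinset.card ≤ p :=
    le_trans (Multiset.toFinset_card_le _) (le_trans (Polynomial.card_roots' f) (le_of_eq hnat))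
  have heq : S = f.roots.toFinset :=
    Finset.eq_of_subset_of_card_le hSroots (by rw [hcardS]; exact hcard)
  have hx : x ∈ f.roots.toFinset := by
    rw [Multiset.mem_toFinset, Polynomial.mem_roots hf0]
    simp only [IsRoot, hf, eval_sub, eval_pow, eval_X, h, sub_self]
  rw [← heq] at hx
  obtain ⟨a, _, rfl⟩ := Finset.mem_image.mp hx
  exact ⟨a, rfl⟩


end FrobAux

/-- Let `W(𝔽̄_p)` be the ring of `p`-typical Witt vectors of an algebraic
closure of `𝔽_p`, and `F` the Witt vector Frobenius.  The additive map `x ↦ F x - x` is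
surjective, and its kernel is exactly the image of the canonical map
`W(𝔽_p) → W(𝔽̄_p)` (so the kernel is isomorphic to `ℤ_p`).  This is the essential
content of the computation of the continuous cohomology of `Gal(𝔽̄_p/𝔽_p)` acting on
`W(𝔽̄_p)`: it is `ℤ_p` in degree `0` and vanishes in positive degrees. -/
theorem frobenius_sub_id_surjective_and_kernel
    (p : ℕ) [Fact p.Prime] :
    Function.Surjective
        (fun x : WittVector p (AlgebraicClosure (ZMod p)) => WittVector.frobenius x - x) ∧
      ∀ x : WittVector p (AlgebraicClosure (ZMod p)),
        WittVector.frobenius x - x = 0 ↔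
          x ∈ Set.range (WittVector.map (algebraMap (ZMod p) (AlgebraicClosure (ZMod p)))) := by
  classical
  constructor
  · intro y
    exact ⟨FrobAux.limit p y, FrobAux.limit_spec p y⟩
  · intro x
    constructor
    · intro h
      have hF : WittVector.frobenius x = x := sub_eq_zero.mp h
      have hcoeff : ∀ n, x.coeff n ∈
          Set.range (algebraMap (ZMod p) (AlgebraicClosure (ZMod p))) := by
        intro n
        apply FrobAux.mem_range_of_pow_card
        have := congrArg (fun z => WittVector.coeff z n) hF
        simp only [WittVector.coeff_frobenius_charP] at this
        exact this
      choose g hg using hcoeff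
      refine ⟨WittVector.mk p g, ?_⟩
      apply WittVector.ext
      intro n
      rw [WittVector.map_coeff, congrFun (WittVector.coeff_mk p g) n, hg]
    · rintro ⟨z, rfl⟩
      rw [sub_eq_zero]
      apply WittVector.ext
      intro n
      rw [WittVector.coeff_frobenius_charP, WittVector.map_coeff,
        ← map_pow, ZMod.pow_card]
end
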